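/- Let u(λ, b) = −a·ln(λ) + α·λ + α·b²/λ − κ·|b| − κ·λ be defined for λ > 0 and b ∈ R, where a > 0 and α > 0 are given. If 0 < κ < 2(√2 − 1)·α, then u is bounded below on (0,∞) × R. -/
import Mathlib


theorem gaussian_regularizer_bounded_below (a α κ : ℝ)
    (ha : 0 < a) (hα : 0 < α) (hκ0 : 0 < κ) (hκ : κ < 2 * (Real.sqrt 2 - 1) * α) :
    ∃ m : ℝ, ∀ lam b : ℝ, 0 < lam →
      m ≤ -a * Real.log lam + α * lam + α * b ^ 2 / lam - κ * |b| - κ * lam := by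
  have hs2 : Real.sqrt 2 ^ 2 = 2 := Real.sq_sqrt (by norm_num)
  have hs1 : (1:ℝ) < Real.sqrt 2 := by
    nlinarith [Real.sqrt_nonneg 2]
  have hs0 : (0:ℝ) < Real.sqrt 2 - 1 := by linarith
  set c : ℝ := α - κ - κ ^ 2 / (4 * α) with hc_def
  have hc : 0 < c := by
    have h1 : 0 < 2 * (Real.sqrt 2 - 1) * α - κ := by linarith
    have h2 : 0 < κ + 2 * (Real.sqrt 2 - 1) * α + 4 * α := by nlinarith
    have key : κ ^ 2 + 4 * α * κ - 4 * α ^ 2 < 0 := by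
      nlinarith [mul_pos h1 h2]
    have h3 : κ ^ 2 / (4 * α) < α - κ := by
      rw [div_lt_iff₀ (by positivity)]
      nlinarith
    rw [hc_def]
    linarith
  refine ⟨a + a * Real.log (c / a), fun lam b hlam => ?_⟩
  -- bound on the b part
  have hb : κ * |b| ≤ α * b ^ 2 / lam + κ ^ 2 * lam / (4 * α) := by
    rw [div_add_div _ _ (ne_of_gt hlam) (by positivity : (4*α) ≠ 0),
      le_div_iff₀ (by positivity)]
    rw [← sq_abs b]
    nlinarith [sq_nonneg (2 * α * |b| - κ * lam)]
  -- bound on the log part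
  have hca : 0 < c / a := div_pos hc ha
  have hlog : Real.log lam ≤ (c / a) * lam - 1 - Real.log (c / a) := by
    have := Real.log_le_sub_one_of_pos (mul_pos hca hlam)
    rw [Real.log_mul (ne_of_gt hca) (ne_of_gt hlam)] at this
    linarith
  have hmul' : a * Real.log lam ≤ a * ((c / a) * lam - 1 - Real.log (c / a)) :=
    mul_le_mul_of_nonneg_left hlog (le_of_lt ha)
  have hac : a * ((c / a) * lam) = c * lam := by field_simp
  have hclam : c = α - κ - κ ^ 2 / (4 * α) := hc_def
  have hdiv : κ ^ 2 / (4 * α) * lam = κ ^ 2 * lam / (4 * α) := by ring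
  nlinarith [hmul', hb, hac]
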